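/- arXiv:1012.4245 — 2 statements merged into one kernel-verified Lean document; each statement's English description precedes it below -/
import Mathlib

section
/- For every q with 0 < q < 1, every integer m ≥ 0 and every x ∈ [0,1], the recurrence R_{∞,q}(t^{m+1},x) = R_{∞,q}(t^m,x) − (1−x) · R_{∞,q}(t^m, v(q,x)) holds, where t^m denotes the monomial function t ↦ t^m on [0,1]. -/
open Finset Filter

noncomputable section

/-- The q-integer `[n]_q = 1 + q + ⋯ + q^(n-1)`. -/
def qInt (q : ℝ) (n : ℕ) : ℝ := ∑ i ∈ Finset.range n, q ^ i

/-- The q-factorial `[n]_q!`. -/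
def qFact (q : ℝ) : ℕ → ℝ
  | 0 => 1
  | n + 1 => qFact q n * qInt q (n + 1)

/-- The q-binomial coefficient `[n k]_q`. -/
def qBinom (q : ℝ) (n k : ℕ) : ℝ := qFact q n / (qFact q k * qFact q (n - k))

/-- The Lupaş basis function `b_{nk}(q;x)`. -/
def lupasB (q : ℝ) (n k : ℕ) (x : ℝ) : ℝ :=
  qBinom q n k * q ^ (k * (k - 1) / 2) * x ^ k * (1 - x) ^ (n - k) /
    ∏ j ∈ Finset.range (n - 1), (1 - x + q ^ (j + 1) * x)

/-- The limit Lupaş basis function `b_{∞k}(q;x)` (for `0 < q < 1`, `x ∈ [0,1)`). -/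
def lupasBInf (q : ℝ) (k : ℕ) (x : ℝ) : ℝ :=
  q ^ (k * (k - 1) / 2) * (x / (1 - x)) ^ k /
    ((1 - q) ^ k * qFact q k * ∏' j : ℕ, (1 + q ^ j * (x / (1 - x))))

/-- The Lupaş q-analogue of the Bernstein operator `R_{n,q}(f,x)`. -/
def lupasR (q : ℝ) (n : ℕ) (f : ℝ → ℝ) (x : ℝ) : ℝ :=
  ∑ k ∈ Finset.range (n + 1), f (qInt q k / qInt q n) * lupasB q n k x

/-- The limit q-Lupaş operator `R_{∞,q}(f,x)` for `0 < q < 1`. -/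
def lupasRInfLow (q : ℝ) (f : ℝ → ℝ) (x : ℝ) : ℝ :=
  if x = 1 then f 1 else ∑' k : ℕ, f (1 - q ^ k) * lupasBInf q k x

/-- The limit q-Lupaş operator `R_{∞,q}(f,x)`: for `q > 1` it is defined by
reflection, `R_{∞,q}(f,x) = R_{∞,1/q}(g,1-x)` with `g(x) = f(1-x)`. -/
def lupasRInf (q : ℝ) (f : ℝ → ℝ) (x : ℝ) : ℝ :=
  if 1 < q then lupasRInfLow (1 / q) (fun t => f (1 - t)) (1 - x)
  else lupasRInfLow q f x

/-- The transform `v(q,x) = qx/(1-x+qx)`. -/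
def vq (q x : ℝ) : ℝ := q * x / (1 - x + q * x)

/-- `L_{n,q}(f,x) = R_{n,q}(f,x) - R_{∞,q}(f,x)`. -/
def lupasL (q : ℝ) (n : ℕ) (f : ℝ → ℝ) (x : ℝ) : ℝ :=
  lupasR q n f x - lupasRInf q f x

/-- The modulus of continuity `ω(f,t)` of `f` on `[0,1]`. -/
def omega1 (f : ℝ → ℝ) (t : ℝ) : ℝ :=
  sSup {d | ∃ x ∈ Set.Icc (0:ℝ) 1, ∃ y ∈ Set.Icc (0:ℝ) 1, |x - y| ≤ t ∧ d = |f x - f y|}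

/-- The second modulus of smoothness `ω₂(f,t)` of `f` on `[0,1]`. -/
def omega2 (f : ℝ → ℝ) (t : ℝ) : ℝ :=
  sSup {d | ∃ h, 0 ≤ h ∧ h ≤ t ∧ ∃ x, 0 ≤ x ∧ x ≤ 1 - 2 * h ∧
    d = |f (x + 2 * h) - 2 * f (x + h) + f x|}

/-!
Write `y = x / (1 - x)`. Then `v(q,x) / (1 - v(q,x)) = q y`, and the infinite product in the
denominator of `b_{∞k}` satisfies `∏ (1 + q^j y) = (1 + y) ∏ (1 + q^j (q y))`, so
`(1 - x) b_{∞k}(q; v(q,x)) = q^k b_{∞k}(q; x)`. Hence `(1 - x) R_{∞,q}(t^m, v(q,x))` is the series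
`∑ (1 - q^k)^m q^k b_{∞k}(q;x)`, and subtracting it termwise from `R_{∞,q}(t^m, x)` multiplies
the k-th node value by `1 - q^k`. All series converge absolutely since `∑ b_{∞k}(q;x)` does (ratio
test) and the node factors are bounded by `1`.
-/

lemma one_le_qInt_succ {q : ℝ} (hq : 0 ≤ q) (k : ℕ) : 1 ≤ qInt q (k + 1) := by
  simpa [qInt] using Finset.single_le_sum (f := fun i => q ^ i) (fun i _ => pow_nonneg hq i)
    (Finset.mem_range.2 k.succ_pos)

lemma qFact_pos {q : ℝ} (hq : 0 ≤ q) (k : ℕ) : 0 < qFact q k := by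
  induction k with
  | zero => norm_num [qFact]
  | succ n ih => exact mul_pos ih (one_pos.trans_le (one_le_qInt_succ hq n))

lemma multipliable_one_add_geometric_mul {q : ℝ} (hq : |q| < 1) (y : ℝ) :
    Multipliable fun j : ℕ => 1 + q ^ j * y :=
  Real.multipliable_one_add_of_summable ((summable_geometric_of_abs_lt_one hq).mul_right y)

lemma tprod_one_add_geometric_mul {q : ℝ} (hq : |q| < 1) (y : ℝ) :
    ∏' j : ℕ, (1 + q ^ j * y) = (1 + y) * ∏' j : ℕ, (1 + q ^ j * (q * y)) := by
  have hshift (j : ℕ) : 1 + q ^ (j + 1) * y = 1 + q ^ j * (q * y) := by ring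
  rw [tprod_eq_zero_mul' (by simpa only [hshift] using multipliable_one_add_geometric_mul hq _)]
  simp only [hshift, pow_zero, one_mul]

lemma Real.one_le_tprod {ι : Type*} {f : ι → ℝ} (h : ∀ i, 1 ≤ f i) : 1 ≤ ∏' i, f i := by
  by_cases hf : Multipliable f
  · exact ge_of_tendsto' hf.hasProd fun s => Finset.one_le_prod fun i _ => h i
  · rw [tprod_eq_one_of_not_multipliable hf]

lemma one_le_tprod_one_add_geometric_mul {q y : ℝ} (hq : 0 ≤ q) (hy : 0 ≤ y) :
    1 ≤ ∏' j : ℕ, (1 + q ^ j * y) :=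
  Real.one_le_tprod fun j => le_add_of_nonneg_right (by positivity)

section LimitBasis

variable {q x : ℝ}

lemma lupasBInf_succ (k : ℕ) :
    lupasBInf q (k + 1) x =
      q ^ k * (x / (1 - x)) / ((1 - q) * qInt q (k + 1)) * lupasBInf q k x := by
  rw [lupasBInf, lupasBInf, Nat.triangle_succ, pow_add, pow_succ, pow_succ,
    show qFact q (k + 1) = qFact q k * qInt q (k + 1) from rfl, div_mul_div_comm]
  congr 1 <;> ring

lemma lupasBInf_nonneg (hq0 : 0 ≤ q) (hq1 : q ≤ 1) (hx0 : 0 ≤ x) (hx1 : x ≤ 1) (k : ℕ) :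
    0 ≤ lupasBInf q k x := by
  have hy : 0 ≤ x / (1 - x) := div_nonneg hx0 (sub_nonneg.2 hx1)
  have hP := one_le_tprod_one_add_geometric_mul hq0 hy
  have hF := qFact_pos hq0 k
  have h1q : 0 ≤ (1 - q) ^ k := pow_nonneg (sub_nonneg.2 hq1) k
  unfold lupasBInf
  positivity

lemma summable_lupasBInf (hq0 : 0 ≤ q) (hq1 : q < 1) (hx0 : 0 ≤ x) (hx1 : x ≤ 1) :
    Summable fun k => lupasBInf q k x := by
  have hb := lupasBInf_nonneg hq0 hq1.le hx0 hx1
  have hy : 0 ≤ x / (1 - x) := div_nonneg hx0 (sub_nonneg.2 hx1)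
  have h1q : 0 < 1 - q := sub_pos.2 hq1
  have hratio : Tendsto (fun k : ℕ => q ^ k * (x / (1 - x)) / (1 - q)) atTop (nhds 0) := by
    simpa using ((tendsto_pow_atTop_nhds_zero_of_lt_one hq0 hq1).mul_const _).div_const _
  refine summable_of_ratio_norm_eventually_le (r := 1 / 2) (by norm_num) ?_
  filter_upwards [hratio.eventually_lt_const (by norm_num : (0 : ℝ) < 1 / 2)] with k hk
  rw [Real.norm_of_nonneg (hb _), Real.norm_of_nonneg (hb _), lupasBInf_succ]
  have hfactor : q ^ k * (x / (1 - x)) / ((1 - q) * qInt q (k + 1)) ≤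
      q ^ k * (x / (1 - x)) / (1 - q) :=
    div_le_div_of_nonneg_left (by positivity) h1q
      (le_mul_of_one_le_right h1q.le (one_le_qInt_succ hq0 k))
  exact mul_le_mul_of_nonneg_right (hfactor.trans hk.le) (hb k)

lemma summable_mul_lupasBInf (hq0 : 0 ≤ q) (hq1 : q < 1) (hx0 : 0 ≤ x) (hx1 : x ≤ 1)
    {g : ℕ → ℝ} (hg : ∀ k, |g k| ≤ 1) : Summable fun k => g k * lupasBInf q k x :=
  (summable_lupasBInf hq0 hq1 hx0 hx1).of_norm_bounded fun k => by
    rw [norm_mul, Real.norm_eq_abs, Real.norm_of_nonneg (lupasBInf_nonneg hq0 hq1.le hx0 hx1 k)]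
    exact mul_le_of_le_one_left (lupasBInf_nonneg hq0 hq1.le hx0 hx1 k) (hg k)

lemma vq_ne_one (hq : 0 ≤ q) (hx0 : 0 ≤ x) (hx1 : x < 1) : vq q x ≠ 1 := by
  have hd : 0 < 1 - x + q * x := by nlinarith
  rw [vq, Ne, div_eq_one_iff_eq hd.ne']
  linarith

lemma vq_div_one_sub_vq (hq : 0 ≤ q) (hx0 : 0 ≤ x) (hx1 : x < 1) :
    vq q x / (1 - vq q x) = q * (x / (1 - x)) := by
  have hd : 0 < 1 - x + q * x := by nlinarith
  rw [vq, one_sub_div hd.ne', div_div_div_cancel_right₀ hd.ne']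
  ring_nf

lemma one_sub_mul_lupasBInf_vq (hq0 : 0 ≤ q) (hq1 : q < 1) (hx0 : 0 ≤ x) (hx1 : x < 1)
    (k : ℕ) : (1 - x) * lupasBInf q k (vq q x) = q ^ k * lupasBInf q k x := by
  have h1x : (1 - x) * (1 + x / (1 - x)) = 1 := by
    field_simp [(sub_pos.2 hx1).ne']
    ring
  rw [lupasBInf, lupasBInf, vq_div_one_sub_vq hq0 hx0 hx1,
    tprod_one_add_geometric_mul (abs_lt.2 ⟨by linarith, hq1⟩) (x / (1 - x))]
  generalize x / (1 - x) = y at h1x ⊢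
  have h1y : 1 + y ≠ 0 := right_ne_zero_of_mul_eq_one h1x
  rw [eq_inv_of_mul_eq_one_left h1x]
  field_simp
  ring

end LimitBasis

lemma lupasRInf_of_le_one {q : ℝ} (hq : q ≤ 1) (f : ℝ → ℝ) {x : ℝ} (hx : x ≠ 1) :
    lupasRInf q f x = ∑' k : ℕ, f (1 - q ^ k) * lupasBInf q k x := by
  simp [lupasRInf, lupasRInfLow, not_lt.2 hq, hx]

theorem lupasRInf_recurrence (q : ℝ) (hq0 : 0 < q) (hq1 : q < 1) (m : ℕ)
    (x : ℝ) (hx : x ∈ Set.Icc (0:ℝ) 1) :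
    lupasRInf q (fun t => t ^ (m + 1)) x =
      lupasRInf q (fun t => t ^ m) x -
        (1 - x) * lupasRInf q (fun t => t ^ m) (vq q x) := by
  obtain ⟨hx0, hx1⟩ := hx
  rcases hx1.eq_or_lt with rfl | hx1
  · simp [lupasRInf, lupasRInfLow, vq, not_lt.2 hq1.le, hq0.ne']
  have hqk (k : ℕ) : |q ^ k| ≤ 1 := by
    rw [abs_of_nonneg (pow_nonneg hq0.le k)]
    exact pow_le_one₀ hq0.le hq1.le
  have hnode (k : ℕ) : |(1 - q ^ k) ^ m| ≤ 1 := by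
    rw [abs_pow]
    exact pow_le_one₀ (abs_nonneg _) (abs_le.2 ⟨by linarith [abs_le.1 (hqk k)],
      sub_le_self _ (pow_nonneg hq0.le k)⟩)
  have hnode_shift (k : ℕ) : |(1 - q ^ k) ^ m * q ^ k| ≤ 1 := by
    rw [abs_mul]
    exact mul_le_one₀ (hnode k) (abs_nonneg _) (hqk k)
  have hshift : ∑' k : ℕ, (1 - x) * ((1 - q ^ k) ^ m * lupasBInf q k (vq q x)) =
      ∑' k : ℕ, (1 - q ^ k) ^ m * q ^ k * lupasBInf q k x :=
    tsum_congr fun k => by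
      rw [mul_left_comm, one_sub_mul_lupasBInf_vq hq0.le hq1 hx0 hx1, mul_assoc]
  rw [lupasRInf_of_le_one hq1.le _ hx1.ne, lupasRInf_of_le_one hq1.le _ hx1.ne,
    lupasRInf_of_le_one hq1.le _ (vq_ne_one hq0.le hx0 hx1), ← tsum_mul_left, hshift,
    ← (summable_mul_lupasBInf hq0.le hq1 hx0 hx1.le hnode).tsum_sub
      (summable_mul_lupasBInf hq0.le hq1 hx0 hx1.le hnode_shift)]
  exact tsum_congr fun k => by ring
end
end

section
/- For every q with 0 < q < 1, every integer n ≥ 1 and every x ∈ [0,1]: L_{n,q}(t²,x) = (q^n/[n]_q) · x(1 − v(q,x)), where t² denotes the function t ↦ t² on [0,1]. -/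
open Finset Filter

noncomputable section

/-!
With nodes `[k]_q/[n]_q = (1 - q^k)/(1 - q^n)` and `(1 - q^k)² = 1 - 2q^k + q^(2k)`, both operators
applied to `t²` reduce to the three moments `∑ q^(rk) b_k`, `r = 0, 1, 2`. For `R_{n,q}` the
q-binomial theorem turns each moment into a ratio of products of the factors `1 - x + q^j x`,
which telescopes to `1`, `1 - x + q^n x` and `(1 - x + q^n x)(1 - x + q^(n+1) x)/(1 - x + qx)`.
For `R_{∞,q}` Euler's identity `∏ (1 + q^j s) = E(s) := ∑ q^(k(k-1)/2) s^k/(q;q)_k`, with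
`s = x/(1 - x)`, and the functional equation `E(s) = (1 + s) E(qs)` give the values
`1`, `1 - x` and `(1 - x)²/(1 - x + qx)` of these moments. The difference is then algebra.
-/

section QArith

variable {q : ℝ}

lemma qInt_pos (hq0 : 0 < q) {n : ℕ} (hn : n ≠ 0) : 0 < qInt q n :=
  Finset.sum_pos (fun i _ => pow_pos hq0 i) (Finset.nonempty_range_iff.2 hn)

lemma qFact_pos_s8 (hq0 : 0 < q) (n : ℕ) : 0 < qFact q n := by
  induction n with
  | zero => exact one_pos
  | succ n ih => exact mul_pos ih (qInt_pos hq0 n.succ_ne_zero)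

lemma qInt_mul_one_sub (n : ℕ) : qInt q n * (1 - q) = 1 - q ^ n :=
  geom_sum_mul_neg q n

lemma qInt_eq (hq : q ≠ 1) (n : ℕ) : qInt q n = (1 - q ^ n) / (1 - q) := by
  rw [← qInt_mul_one_sub, mul_div_cancel_right₀ _ (sub_ne_zero.2 hq.symm)]

lemma qInt_add (a b : ℕ) : qInt q (a + b) = qInt q a + q ^ a * qInt q b := by
  simp only [qInt, Finset.sum_range_add, Finset.mul_sum, pow_add]

lemma qBinom_zero_right (hq0 : 0 < q) (n : ℕ) : qBinom q n 0 = 1 := by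
  rw [qBinom, Nat.sub_zero, qFact, one_mul, div_self (qFact_pos_s8 hq0 n).ne']

lemma qBinom_self (hq0 : 0 < q) (n : ℕ) : qBinom q n n = 1 := by
  rw [qBinom, Nat.sub_self, qFact, mul_one, div_self (qFact_pos_s8 hq0 n).ne']

lemma qBinom_succ_succ (hq0 : 0 < q) {n k : ℕ} (h : k < n) :
    qBinom q (n + 1) (k + 1) = qBinom q n (k + 1) + q ^ (n - k) * qBinom q n k := by
  obtain ⟨m, rfl⟩ : ∃ m, n = k + 1 + m := ⟨n - (k + 1), by omega⟩
  have hsplit : qInt q (k + 1 + m + 1) = qInt q (m + 1) + q ^ (m + 1) * qInt q (k + 1) := by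
    rw [show k + 1 + m + 1 = (m + 1) + (k + 1) by omega, qInt_add]
  rw [qBinom, qBinom, qBinom, show k + 1 + m - k = m + 1 by omega,
    show k + 1 + m + 1 - (k + 1) = m + 1 by omega, show k + 1 + m - (k + 1) = m by omega]
  simp only [qFact, hsplit]
  have := qFact_pos_s8 hq0 (k + 1 + m)
  have := qFact_pos_s8 hq0 m
  have := qFact_pos_s8 hq0 k
  have := qInt_pos hq0 m.succ_ne_zero
  have := qInt_pos hq0 k.succ_ne_zero
  field_simp

end QArith

theorem prod_add_pow_mul_eq_sum_qBinom {q : ℝ} (hq0 : 0 < q) (u v : ℝ) (n : ℕ) :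
    ∏ j ∈ range n, (u + q ^ j * v)
      = ∑ k ∈ range (n + 1), qBinom q n k * q ^ (k * (k - 1) / 2) * v ^ k * u ^ (n - k) := by
  induction n with
  | zero => simp [qBinom, qFact]
  | succ n ih =>
    set T : ℕ → ℝ := fun k => qBinom q n k * q ^ (k * (k - 1) / 2) * v ^ k * u ^ (n - k)
    have hmid : ∀ k ∈ range n,
        qBinom q (n + 1) (k + 1) * q ^ ((k + 1) * (k + 1 - 1) / 2) * v ^ (k + 1)
          * u ^ (n + 1 - (k + 1)) = T (k + 1) * u + T k * (q ^ n * v) := by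
      intro k hk
      have hk : k < n := mem_range.1 hk
      obtain ⟨m, rfl⟩ : ∃ m, n = k + 1 + m := ⟨n - (k + 1), by omega⟩
      rw [qBinom_succ_succ hq0 hk, show k + 1 + m - k = m + 1 by omega]
      simp only [T, Nat.triangle_succ, show k + 1 + m + 1 - (k + 1) = m + 1 by omega,
        show k + 1 + m - (k + 1) = m by omega, show k + 1 + m - k = m + 1 by omega]
      ring
    have hlast : qBinom q (n + 1) (n + 1) * q ^ ((n + 1) * (n + 1 - 1) / 2) * v ^ (n + 1)
        * u ^ (n + 1 - (n + 1)) = T n * (q ^ n * v) := by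
      simp only [T, qBinom_self hq0, Nat.triangle_succ, Nat.sub_self]
      ring
    conv_rhs => rw [sum_range_succ', sum_range_succ, sum_congr rfl hmid, hlast, sum_add_distrib]
    rw [prod_range_succ, ih, mul_add, sum_mul, sum_mul, sum_range_succ' (fun k => T k * u),
      sum_range_succ (fun k => T k * (q ^ n * v))]
    simp only [T, qBinom_zero_right hq0, Nat.sub_zero]
    ring

section LupasMoments

variable {q x : ℝ}

lemma one_sub_add_pow_mul_pos (hq0 : 0 < q) (hx0 : 0 ≤ x) (hx1 : x ≤ 1) (j : ℕ) :
    0 < 1 - x + q ^ j * x := by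
  rcases hx0.eq_or_lt with rfl | hx
  · simp
  · nlinarith [pow_pos hq0 j]

theorem sum_pow_mul_lupasB (hq0 : 0 < q) (x : ℝ) (n r : ℕ) :
    ∑ k ∈ range (n + 1), (q ^ r) ^ k * lupasB q n k x
      = (∏ j ∈ Ico r (n + r), (1 - x + q ^ j * x))
        / ∏ j ∈ Ico 1 n, (1 - x + q ^ j * x) := by
  have hnum : ∏ j ∈ Ico r (n + r), (1 - x + q ^ j * x)
      = ∏ j ∈ range n, ((1 - x) + q ^ j * (q ^ r * x)) := by
    rw [prod_Ico_eq_prod_range, Nat.add_sub_cancel]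
    exact prod_congr rfl fun j _ => by ring
  have hden : ∏ j ∈ Ico 1 n, (1 - x + q ^ j * x)
      = ∏ j ∈ range (n - 1), (1 - x + q ^ (j + 1) * x) := by
    rw [prod_Ico_eq_prod_range]
    exact prod_congr rfl fun j _ => by rw [add_comm 1 j]
  rw [hnum, hden, prod_add_pow_mul_eq_sum_qBinom hq0, sum_div]
  refine sum_congr rfl fun k _ => ?_
  rw [lupasB, mul_pow]
  ring

theorem lupasR_sq (hq0 : 0 < q) (hq1 : q ≠ 1) {n : ℕ} (hn : 1 ≤ n)
    (hx0 : 0 ≤ x) (hx1 : x ≤ 1) :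
    lupasR q n (fun t => t ^ 2) x
      = (1 - 2 * (1 - x + q ^ n * x)
          + (1 - x + q ^ n * x) * (1 - x + q ^ (n + 1) * x) / (1 - x + q * x))
        / (1 - q ^ n) ^ 2 := by
  set f : ℕ → ℝ := fun j => 1 - x + q ^ j * x with hf
  have hfpos : ∀ j, 0 < f j := one_sub_add_pow_mul_pos hq0 hx0 hx1
  have hD : ∏ j ∈ Ico 1 n, f j ≠ 0 := (prod_pos fun j _ => hfpos j).ne'
  have hM0 : ∑ k ∈ range (n + 1), (q ^ 0) ^ k * lupasB q n k x = 1 := by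
    rw [sum_pow_mul_lupasB hq0, add_zero, prod_eq_prod_Ico_succ_bot (by omega),
      div_eq_one_iff_eq hD]
    simp [hf]
  have hM1 : ∑ k ∈ range (n + 1), (q ^ 1) ^ k * lupasB q n k x = f n := by
    rw [sum_pow_mul_lupasB hq0, prod_Ico_succ_top hn, mul_div_cancel_left₀ _ hD]
  have hM2 : ∑ k ∈ range (n + 1), (q ^ 2) ^ k * lupasB q n k x = f n * f (n + 1) / f 1 := by
    have hIco : f 1 * ∏ j ∈ Ico 2 (n + 2), f j
        = (∏ j ∈ Ico 1 n, f j) * f n * f (n + 1) := by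
      rw [← prod_eq_prod_Ico_succ_bot (by omega), prod_Ico_succ_top (by omega),
        prod_Ico_succ_top hn]
    rw [sum_pow_mul_lupasB hq0, div_eq_div_iff hD (hfpos 1).ne']
    linear_combination hIco
  have hnode : ∀ k : ℕ, (qInt q k / qInt q n) ^ 2
      = ((q ^ 0) ^ k - 2 * (q ^ 1) ^ k + (q ^ 2) ^ k) / (1 - q ^ n) ^ 2 := by
    intro k
    rw [qInt_eq hq1, qInt_eq hq1, div_div_div_cancel_right₀ (sub_ne_zero.2 hq1.symm), div_pow]
    ring
  calc lupasR q n (fun t => t ^ 2) x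
      = (∑ k ∈ range (n + 1), (q ^ 0) ^ k * lupasB q n k x
          - 2 * ∑ k ∈ range (n + 1), (q ^ 1) ^ k * lupasB q n k x
          + ∑ k ∈ range (n + 1), (q ^ 2) ^ k * lupasB q n k x) / (1 - q ^ n) ^ 2 := by
        rw [lupasR, mul_sum, ← sum_sub_distrib, ← sum_add_distrib, sum_div]
        refine sum_congr rfl fun k _ => ?_
        rw [hnode]
        ring
    _ = _ := by rw [hM0, hM1, hM2]; simp only [hf, pow_one]

end LupasMoments

/-- `(1 - q) ^ k * qFact q k` is the q-Pochhammer symbol `(q;q)_k = (1 - q)⋯(1 - q^k)`. -/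
def eulerTerm (q : ℝ) (k : ℕ) (t : ℝ) : ℝ :=
  q ^ (k * (k - 1) / 2) * t ^ k / ((1 - q) ^ k * qFact q k)

def eulerSeries (q t : ℝ) : ℝ := ∑' k, eulerTerm q k t

section Euler

open Topology

variable {q : ℝ}

@[simp]
lemma eulerTerm_zero (t : ℝ) : eulerTerm q 0 t = 1 := by
  simp [eulerTerm, qFact]

lemma eulerTerm_mul_left (k : ℕ) (a t : ℝ) :
    eulerTerm q k (a * t) = a ^ k * eulerTerm q k t := by
  rw [eulerTerm, eulerTerm, mul_pow]
  ring

lemma eulerTerm_succ (hq0 : 0 < q) (hq1 : q ≠ 1) (k : ℕ) (t : ℝ) :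
    eulerTerm q (k + 1) t = q ^ k * t / (1 - q ^ (k + 1)) * eulerTerm q k t := by
  have := qFact_pos_s8 hq0 k
  have := qInt_pos hq0 k.succ_ne_zero
  have := sub_ne_zero.2 hq1.symm
  rw [eulerTerm, eulerTerm, Nat.triangle_succ, qFact, ← qInt_mul_one_sub]
  field_simp
  ring

lemma summable_norm_eulerTerm (hq0 : 0 < q) (hq1 : q < 1) (t : ℝ) :
    Summable fun k => ‖eulerTerm q k t‖ := by
  refine summable_of_ratio_norm_eventually_le (r := 1 / 2) (by norm_num) ?_
  have hsmall : Tendsto (fun k : ℕ => q ^ k * |t| / (1 - q)) atTop (𝓝 0) := by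
    simpa using ((tendsto_pow_atTop_nhds_zero_of_lt_one hq0.le hq1).mul_const |t|).div_const
      (1 - q)
  filter_upwards [hsmall.eventually (eventually_le_nhds (by norm_num : (0 : ℝ) < 1 / 2))]
    with k hk
  have hq' : q ^ (k + 1) ≤ q := pow_le_of_le_one hq0.le hq1.le k.succ_ne_zero
  have hratio : q ^ k * |t| / (1 - q ^ (k + 1)) ≤ q ^ k * |t| / (1 - q) :=
    div_le_div_of_nonneg_left (by positivity) (by linarith) (by linarith)
  rw [norm_norm, norm_norm, eulerTerm_succ hq0 hq1.ne, norm_mul, Real.norm_eq_abs,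
    abs_div, abs_mul, abs_of_pos (pow_pos hq0 k), abs_of_pos (show 0 < 1 - q ^ (k + 1) by linarith)]
  exact mul_le_mul_of_nonneg_right (hratio.trans hk) (norm_nonneg _)

lemma summable_eulerTerm (hq0 : 0 < q) (hq1 : q < 1) (t : ℝ) :
    Summable fun k => eulerTerm q k t :=
  (summable_norm_eulerTerm hq0 hq1 t).of_norm

lemma eulerTerm_succ_eq_add (hq0 : 0 < q) (hq1 : q ≠ 1) (k : ℕ) (t : ℝ) :
    eulerTerm q (k + 1) t = eulerTerm q (k + 1) (q * t) + t * eulerTerm q k (q * t) := by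
  have : 1 - q ^ (k + 1) ≠ 0 :=
    sub_ne_zero.2 fun h => hq1 ((pow_eq_one_iff_of_nonneg hq0.le k.succ_ne_zero).1 h.symm)
  rw [eulerTerm_mul_left, eulerTerm_mul_left, eulerTerm_succ hq0 hq1]
  field_simp
  ring

lemma eulerSeries_eq_one_add_mul (hq0 : 0 < q) (hq1 : q < 1) (t : ℝ) :
    eulerSeries q t = (1 + t) * eulerSeries q (q * t) := by
  have hs := summable_eulerTerm hq0 hq1 (q * t)
  unfold eulerSeries
  rw [(summable_eulerTerm hq0 hq1 t).tsum_eq_zero_add, hs.tsum_eq_zero_add,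
    tsum_congr fun k => eulerTerm_succ_eq_add hq0 hq1.ne k t,
    ((summable_nat_add_iff 1).2 hs).tsum_add (hs.mul_left t), tsum_mul_left,
    hs.tsum_eq_zero_add]
  simp only [eulerTerm_zero]
  ring

lemma prod_mul_eulerSeries (hq0 : 0 < q) (hq1 : q < 1) (s : ℝ) (m : ℕ) :
    (∏ j ∈ range m, (1 + q ^ j * s)) * eulerSeries q (q ^ m * s) = eulerSeries q s := by
  induction m with
  | zero => simp
  | succ m ih =>
    rw [prod_range_succ, mul_assoc, pow_succ', mul_assoc q, ← eulerSeries_eq_one_add_mul hq0 hq1,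
      ih]

lemma tendsto_eulerSeries_pow_mul (hq0 : 0 < q) (hq1 : q < 1) (s : ℝ) :
    Tendsto (fun m => eulerSeries q (q ^ m * s)) atTop (𝓝 1) := by
  have hlim : ∀ k, Tendsto (fun m => eulerTerm q k (q ^ m * s)) atTop
      (𝓝 ((0 : ℝ) ^ k * eulerTerm q k s)) := fun k => by
    simp only [eulerTerm_mul_left]
    exact (((tendsto_pow_atTop_nhds_zero_of_lt_one hq0.le hq1).pow k).mul_const _)
  have hbound : ∀ m k, ‖eulerTerm q k (q ^ m * s)‖ ≤ ‖eulerTerm q k s‖ := fun m k => by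
    rw [eulerTerm_mul_left, norm_mul, norm_pow, Real.norm_of_nonneg (pow_nonneg hq0.le m)]
    exact mul_le_of_le_one_left (norm_nonneg _) (pow_le_one₀ (by positivity)
      (pow_le_one₀ hq0.le hq1.le))
  have h := tendsto_tsum_of_dominated_convergence (summable_norm_eulerTerm hq0 hq1 s) hlim
    (Eventually.of_forall hbound)
  rwa [tsum_eq_single 0 fun k hk => by rw [zero_pow hk, zero_mul], pow_zero, one_mul,
    eulerTerm_zero] at h

theorem tprod_one_add_pow_mul_eq_eulerSeries (hq0 : 0 < q) (hq1 : q < 1) (s : ℝ) :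
    ∏' j, (1 + q ^ j * s) = eulerSeries q s := by
  have hmul : Multipliable fun j => 1 + q ^ j * s :=
    Real.multipliable_one_add_of_summable ((summable_geometric_of_lt_one hq0.le hq1).mul_right s)
  have h := hmul.tendsto_prod_tprod_nat.mul (tendsto_eulerSeries_pow_mul hq0 hq1 s)
  simp only [prod_mul_eulerSeries hq0 hq1, mul_one] at h
  exact tendsto_nhds_unique h tendsto_const_nhds

lemma one_le_eulerSeries (hq0 : 0 < q) (hq1 : q < 1) {t : ℝ} (ht : 0 ≤ t) :
    1 ≤ eulerSeries q t := by
  have hnonneg : ∀ k, 0 ≤ eulerTerm q k t := fun k => by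
    have := qFact_pos_s8 hq0 k
    have : 0 < 1 - q := by linarith
    unfold eulerTerm
    positivity
  unfold eulerSeries
  simpa using (summable_eulerTerm hq0 hq1 t).le_tsum 0 fun k _ => hnonneg k

end Euler

theorem lupasRInf_sq {q x : ℝ} (hq0 : 0 < q) (hq1 : q < 1) (hx0 : 0 ≤ x) (hx1 : x ≤ 1) :
    lupasRInf q (fun t => t ^ 2) x = 1 - 2 * (1 - x) + (1 - x) ^ 2 / (1 - x + q * x) := by
  rw [lupasRInf, if_neg (not_lt.2 hq1.le), lupasRInfLow]
  split_ifs with hx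
  · simp [hx]
  have hx' : 0 < 1 - x := sub_pos.2 (lt_of_le_of_ne hx1 hx)
  set s := x / (1 - x) with hs
  have hbasis : ∀ k, lupasBInf q k x = eulerTerm q k s / eulerSeries q s := fun k => by
    rw [lupasBInf, ← hs, tprod_one_add_pow_mul_eq_eulerSeries hq0 hq1, eulerTerm, div_div]
  have hterm : ∀ k : ℕ, (1 - q ^ k) ^ 2 * lupasBInf q k x
      = (eulerTerm q k s - 2 * eulerTerm q k (q * s) + eulerTerm q k (q ^ 2 * s))
        / eulerSeries q s := fun k => by
    rw [hbasis, eulerTerm_mul_left, eulerTerm_mul_left, ← pow_mul, mul_comm 2 k, pow_mul]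
    ring
  have h0 := summable_eulerTerm hq0 hq1 s
  have h1 := (summable_eulerTerm hq0 hq1 (q * s)).mul_left 2
  have h2 := summable_eulerTerm hq0 hq1 (q ^ 2 * s)
  have hE2 : eulerSeries q (q * s) = (1 + q * s) * eulerSeries q (q ^ 2 * s) := by
    rw [eulerSeries_eq_one_add_mul hq0 hq1, ← mul_assoc, ← pow_two]
  have hE : eulerSeries q (q ^ 2 * s) ≠ 0 :=
    (one_pos.trans_le (one_le_eulerSeries hq0 hq1 (by positivity))).ne'
  rw [tsum_congr hterm, tsum_div_const, (h0.sub h1).tsum_add h2, h0.tsum_sub h1, tsum_mul_left]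
  change (eulerSeries q s - 2 * eulerSeries q (q * s) + eulerSeries q (q ^ 2 * s))
    / eulerSeries q s = _
  have hc : 1 - x + x * q ≠ 0 := by nlinarith
  rw [eulerSeries_eq_one_add_mul hq0 hq1 s, hE2, hs]
  generalize eulerSeries q (q ^ 2 * (x / (1 - x))) = E at hE ⊢
  field_simp
  ring

theorem lupasL_second_moment (q : ℝ) (hq0 : 0 < q) (hq1 : q < 1) (n : ℕ) (hn : 1 ≤ n)
    (x : ℝ) (hx : x ∈ Set.Icc (0:ℝ) 1) :
    lupasL q n (fun t => t ^ 2) x = q ^ n / qInt q n * (x * (1 - vq q x)) := by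
  obtain ⟨hx0, hx1⟩ := hx
  have hqn : q ^ n < 1 := pow_lt_one₀ hq0.le hq1 (by omega)
  have hc : 1 - x + x * q ≠ 0 := by linarith [one_sub_add_pow_mul_pos hq0 hx0 hx1 1]
  rw [lupasL, lupasR_sq hq0 hq1.ne hn hx0 hx1, lupasRInf_sq hq0 hq1 hx0 hx1, vq, qInt_eq hq1.ne]
  have : 1 - q ^ n ≠ 0 := by linarith
  field_simp
  ring
end
end
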